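/- Fix n ≥ 1, integers N₁,…,N_n with each N_i ≥ 2, and positive reals Δ₁,…,Δ_n. Set Δ̄_i = Δ_i/N_i and N = N₁⋯N_n. Let U_n be the n×n matrix with [U_n]_{i,i} = N·(N_i+1)(2N_i+1)/6·Δ̄_i² and [U_n]_{i,j} = N·(N_i+1)(N_j+1)/4·Δ̄_iΔ̄_j for i ≠ j. Let E = diag(1/((N₁²−1)Δ̄₁²), …, 1/((N_n²−1)Δ̄_n²)), let y ∈ ℝⁿ have components y_i = 1/((N_i−1)Δ̄_i), and let s = Σ_{i=1}^n (N_i+1)/(N_i−1). Then U_n is invertible and U_n⁻¹ = (12/N)·(E − (3/(1+3s))·y yᵀ). -/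
import Mathlib


open scoped BigOperators

set_option maxHeartbeats 1000000 in
/-- Lemma 3.2 of the paper: the matrix `Uₙ = S_R S_Rᵀ` is invertible, with
`Uₙ⁻¹ = (12/N)·(E − (3/(1+3s))·yyᵀ)`. -/
theorem Un_inverse
    (n : ℕ) (hn : 1 ≤ n)
    (Nv : Fin n → ℕ) (hN : ∀ i, 2 ≤ Nv i)
    (Δ : Fin n → ℝ) (hΔ : ∀ i, 0 < Δ i)
    (U : Matrix (Fin n) (Fin n) ℝ)
    (hU : U = Matrix.of fun i j : Fin n =>
      if i = j then
        (∏ l, (Nv l : ℝ)) * (((Nv i : ℝ) + 1) * (2 * (Nv i : ℝ) + 1) / 6)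
          * (Δ i / (Nv i : ℝ)) ^ 2
      else
        (∏ l, (Nv l : ℝ)) * (((Nv i : ℝ) + 1) * ((Nv j : ℝ) + 1) / 4)
          * ((Δ i / (Nv i : ℝ)) * (Δ j / (Nv j : ℝ)))) :
    IsUnit U.det ∧
      U⁻¹ = (12 / ∏ l, (Nv l : ℝ)) •
        (Matrix.diagonal (fun i => 1 / ((((Nv i : ℝ)) ^ 2 - 1) * (Δ i / (Nv i : ℝ)) ^ 2))
          - (3 / (1 + 3 * ∑ i, ((Nv i : ℝ) + 1) / ((Nv i : ℝ) - 1))) •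
            Matrix.vecMulVec (fun i => 1 / (((Nv i : ℝ) - 1) * (Δ i / (Nv i : ℝ))))
              (fun i => 1 / (((Nv i : ℝ) - 1) * (Δ i / (Nv i : ℝ))))) := by
  set P := ∏ l, (Nv l : ℝ) with hP
  set d : Fin n → ℝ := fun i => Δ i / (Nv i : ℝ) with hd_def
  set s : ℝ := ∑ i, ((Nv i : ℝ) + 1) / ((Nv i : ℝ) - 1) with hs_def
  set V : Matrix (Fin n) (Fin n) ℝ :=
    (12 / P) •
      (Matrix.diagonal (fun i => 1 / ((((Nv i : ℝ)) ^ 2 - 1) * d i ^ 2))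
        - (3 / (1 + 3 * s)) •
          Matrix.vecMulVec (fun i => 1 / (((Nv i : ℝ) - 1) * d i))
            (fun i => 1 / (((Nv i : ℝ) - 1) * d i))) with hV
  -- basic nonvanishing facts
  have hN2 : ∀ i, (2:ℝ) ≤ (Nv i : ℝ) := fun i => by exact_mod_cast hN i
  have hNne : ∀ i, (Nv i : ℝ) ≠ 0 := fun i => by have := hN2 i; linarith
  have hNm1 : ∀ i, (Nv i : ℝ) - 1 ≠ 0 := fun i => by have := hN2 i; intro h; linarith
  have hNsq : ∀ i, ((Nv i : ℝ)) ^ 2 - 1 ≠ 0 := fun i => by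
    have := hN2 i; intro h; nlinarith
  have hd : ∀ i, d i ≠ 0 := fun i => div_ne_zero (hΔ i).ne' (hNne i)
  have hPne : P ≠ 0 := Finset.prod_ne_zero_iff.mpr fun i _ => hNne i
  have hs0 : (0:ℝ) ≤ s := Finset.sum_nonneg fun i _ => by
    have := hN2 i
    apply div_nonneg <;> linarith
  have h13s : (1:ℝ) + 3 * s ≠ 0 := by intro h; linarith
  -- entry formulas (still need definitional bodies here)
  have hUik : ∀ i k, U i k =
      (if i = k then P * (((Nv i:ℝ))^2 - 1) * d i ^ 2 / 12 else 0)
        + (P * ((Nv i:ℝ)+1) * d i / 4) * (((Nv k:ℝ)+1) * d k) := by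
    intro i k
    rw [hU]
    by_cases h : i = k
    · subst h
      simp only [Matrix.of_apply, if_true, eq_self_iff_true, hd_def]
      ring
    · simp only [Matrix.of_apply, if_neg h, hd_def]
      ring
  have hVkj : ∀ k j, V k j = (12/P) *
      ((if k = j then 1 / ((((Nv k : ℝ)) ^ 2 - 1) * d k ^ 2) else 0)
        - (3/(1+3*s)) * ((1 / (((Nv k : ℝ) - 1) * d k)) * (1 / (((Nv j : ℝ) - 1) * d j)))) := by
    intro k j
    rw [hV]
    simp [Matrix.smul_apply, Matrix.sub_apply, Matrix.diagonal_apply,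
      Matrix.vecMulVec_apply, smul_eq_mul, mul_sub]
  -- now make everything opaque
  clear_value V
  clear_value s
  clear_value d
  clear_value P
  clear hU hV hd_def hP
  have hUV : U * V = 1 := by
    ext i j
    rw [Matrix.mul_apply, Matrix.one_apply]
    have h2 : ∀ k, ((Nv k:ℝ)+1) * d k * V k j
        = (12/P) * ((if k = j then 1 / (((Nv j : ℝ) - 1) * d j) else 0)
            - (3/(1+3*s)) * (((Nv k:ℝ)+1)/((Nv k:ℝ)-1)) * (1 / (((Nv j : ℝ) - 1) * d j))) := by
      intro k
      rw [hVkj]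
      have hk1 := hNm1 k; have hk2 := hNsq k; have hk3 := hd k
      have hj1 := hNm1 j; have hj3 := hd j
      by_cases h : k = j
      · subst h
        rw [if_pos rfl, if_pos rfl]
        field_simp
        ring
      · rw [if_neg h, if_neg h]
        field_simp
        ring
    have hrearr : ∀ (c yj : ℝ) (r : Fin n → ℝ),
        ∑ k, c * r k * yj = c * (∑ k, r k) * yj := by
      intro c yj r
      rw [Finset.mul_sum, Finset.sum_mul]
    have hsum : ∑ k, ((Nv k:ℝ)+1) * d k * V k j
        = (12/P) * ((1 / (((Nv j : ℝ) - 1) * d j))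
            - (3/(1+3*s)) * s * (1 / (((Nv j : ℝ) - 1) * d j))) := by
      rw [Finset.sum_congr rfl fun k _ => h2 k, ← Finset.mul_sum]
      congr 1
      rw [Finset.sum_sub_distrib, Finset.sum_ite_eq' Finset.univ j
        (fun _ => 1 / (((Nv j : ℝ) - 1) * d j)), if_pos (Finset.mem_univ j),
        hrearr, ← hs_def]
    calc ∑ k, U i k * V k j
        = ∑ k, ((if i = k then (P * (((Nv i:ℝ))^2 - 1) * d i ^ 2 / 12) * V k j else 0)
            + (P * ((Nv i:ℝ)+1) * d i / 4) * (((Nv k:ℝ)+1) * d k * V k j)) := by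
          refine Finset.sum_congr rfl fun k _ => ?_
          rw [hUik i k]
          by_cases h : i = k
          · rw [if_pos h, if_pos h]; ring
          · rw [if_neg h, if_neg h]; ring
      _ = (P * (((Nv i:ℝ))^2 - 1) * d i ^ 2 / 12) * V i j
            + (P * ((Nv i:ℝ)+1) * d i / 4) * ∑ k, ((Nv k:ℝ)+1) * d k * V k j := by
          rw [Finset.sum_add_distrib, ← Finset.mul_sum,
            Finset.sum_ite_eq Finset.univ i
              (fun k => (P * (((Nv i:ℝ))^2 - 1) * d i ^ 2 / 12) * V k j),
            if_pos (Finset.mem_univ i)]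
      _ = if i = j then 1 else 0 := by
          rw [hsum, hVkj]
          have hi1 := hNm1 i; have hi2 := hNsq i; have hi3 := hd i
          have hj1 := hNm1 j; have hj2 := hNsq j; have hj3 := hd j
          by_cases h : i = j
          · subst h
            rw [if_pos rfl, if_pos rfl]
            field_simp
            ring
          · rw [if_neg h, if_neg h]
            field_simp
            ring
  exact ⟨Matrix.isUnit_det_of_right_inverse hUV, Matrix.inv_eq_right_inv hUV⟩
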